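/- Correctness of the modified Hadamard test for anticommutator overlaps: let ψ₀ ∈ ℂ^d, let U and w be unitary complex d×d matrices, and let H be a Hermitian d×d matrix. Define the (2d)-dimensional vector φ indexed by Fin 2 × Fin d via φ(0, i) = (1/√2) · (U ψ₀)(i) and φ(1, i) = (1/√2) · (U (w ψ₀))(i), let Y be the Pauli matrix with entries Y₀₀ = Y₁₁ = 0, Y₀₁ = -i, Y₁₀ = i, and let B = Y ⊗ H be the Kronecker product acting on ℂ² ⊗ ℂ^d ≅ ℂ^(2d). Then ⟪φ, B φ⟫ = (1/2) ⟪ψ₀, (Ω * w - wᴴ * Ω) ψ₀⟫, where Ω = -i · (Uᴴ * H * U). -/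

import Mathlib

/-!
Because the Pauli matrix `Y` is off-diagonal, the form `⟪φ, (Y ⊗ H) φ⟫` only couples the two
halves `φ₀ = φ(0,·)`, `φ₁ = φ(1,·)`: it equals `-i ⟪φ₀, H φ₁⟫ + i ⟪φ₁, H φ₀⟫`. Substituting
`φ₀ = U ψ₀ / √2`, `φ₁ = U w ψ₀ / √2` and moving `U` and `w` across the inner products turns this
into `½ (-i ⟪ψ₀, Uᴴ H U w ψ₀⟫ + i ⟪ψ₀, wᴴ Uᴴ H U ψ₀⟫)`, which is `½ ⟪ψ₀, (Ω w - wᴴ Ω) ψ₀⟫`.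
-/

open Matrix Kronecker

def toEucIdx (n : Type*) [Fintype n] : (n → ℂ) → EuclideanSpace ℂ n := fun x => WithLp.toLp 2 x

theorem inner_toEucIdx {n : Type*} [Fintype n] (x : EuclideanSpace ℂ n) (v : n → ℂ) :
    inner ℂ x (toEucIdx n v) = star (WithLp.ofLp x) ⬝ᵥ v :=
  dotProduct_comm _ _

theorem Function.curry_star {α β R : Type*} [Star R] (x : α × β → R) :
    Function.curry (star x) = star (Function.curry x) :=
  rfl

section

variable {R l m n p : Type*} [Fintype l] [Fintype m] [Fintype n] [Fintype p]

theorem dotProduct_kronecker_mulVec [CommSemiring R] (A : Matrix l m R) (M : Matrix n p R)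
    (x : l × n → R) (y : m × p → R) :
    x ⬝ᵥ (A ⊗ₖ M) *ᵥ y =
      ∑ a, ∑ b, A a b * (Function.curry x a ⬝ᵥ M *ᵥ Function.curry y b) := by
  simp only [dotProduct, mulVec, kroneckerMap_apply, Fintype.sum_prod_type, Finset.mul_sum,
    Function.curry_apply]
  refine Finset.sum_congr rfl fun a _ => ?_
  rw [Finset.sum_comm]
  refine Finset.sum_congr rfl fun b _ => Finset.sum_congr rfl fun i _ =>
    Finset.sum_congr rfl fun j _ => ?_
  ring

theorem dotProduct_pauliY_kronecker_mulVec (M : Matrix n n ℂ) (x y : Fin 2 × n → ℂ) :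
    x ⬝ᵥ (!![0, -Complex.I; Complex.I, 0] ⊗ₖ M) *ᵥ y =
      -Complex.I * (Function.curry x 0 ⬝ᵥ M *ᵥ Function.curry y 1) +
        Complex.I * (Function.curry x 1 ⬝ᵥ M *ᵥ Function.curry y 0) := by
  simp [dotProduct_kronecker_mulVec, Fin.sum_univ_two]

theorem star_mulVec_dotProduct [CommSemiring R] [StarRing R] (A : Matrix m n R) (x : n → R)
    (y : m → R) :
    star (A *ᵥ x) ⬝ᵥ y = star x ⬝ᵥ Aᴴ *ᵥ y := by
  rw [star_mulVec, dotProduct_mulVec]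

end

theorem hadamard_test_anticommutator_general (d : ℕ)
    (ψ₀ : EuclideanSpace ℂ (Fin d))
    (U w : Matrix (Fin d) (Fin d) ℂ)
    (H : Matrix (Fin d) (Fin d) ℂ)
    (Y : Matrix (Fin 2) (Fin 2) ℂ)
    (hY : Y = !![0, -Complex.I; Complex.I, 0])
    (B : Matrix (Fin 2 × Fin d) (Fin 2 × Fin d) ℂ)
    (hB : B = Y ⊗ₖ H)
    (φ : EuclideanSpace ℂ (Fin 2 × Fin d))
    (hφ0 : ∀ i : Fin d, φ (0, i) = ((Real.sqrt 2)⁻¹ : ℂ) * U.mulVec ψ₀ i)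
    (hφ1 : ∀ i : Fin d, φ (1, i) = ((Real.sqrt 2)⁻¹ : ℂ) * U.mulVec (w.mulVec ψ₀) i)
    (Ω : Matrix (Fin d) (Fin d) ℂ)
    (hΩ : Ω = (-Complex.I) • (Uᴴ * H * U)) :
    (inner ℂ φ (toEucIdx (Fin 2 × Fin d) (B.mulVec φ)) : ℂ) =
      (1 / 2 : ℂ) * (inner ℂ ψ₀ (toEucIdx (Fin d) ((Ω * w - wᴴ * Ω).mulVec ψ₀)) : ℂ) := by
  set c : ℂ := (Real.sqrt 2)⁻¹
  have hc : star c * c = 1 / 2 := by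
    rw [Complex.star_def, map_inv₀, Complex.conj_ofReal, ← mul_inv, ← Complex.ofReal_mul,
      Real.mul_self_sqrt zero_le_two]
    norm_num
  have hφ : Function.curry (WithLp.ofLp φ) = ![c • U *ᵥ ψ₀, c • U *ᵥ w *ᵥ ψ₀] := by
    ext a i
    fin_cases a
    · exact hφ0 i
    · exact hφ1 i
  rw [inner_toEucIdx, inner_toEucIdx, hB, hY, dotProduct_pauliY_kronecker_mulVec,
    Function.curry_star, hφ]
  simp only [Pi.star_apply, cons_val_zero, cons_val_one, star_smul, mulVec_smul,
    dotProduct_smul, smul_dotProduct, star_mulVec_dotProduct, conjTranspose_mul, mulVec_mulVec,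
    smul_eq_mul, hΩ, Matrix.smul_mul, Matrix.mul_smul, sub_mulVec, smul_mulVec, dotProduct_sub,
    Matrix.mul_assoc]
  rw [← hc]
  ring

/-- Correctness of the modified Hadamard test for anticommutator
overlaps: with `φ(0,·) = (1/√2) U ψ₀`, `φ(1,·) = (1/√2) U w ψ₀`, `B = Y ⊗ H` for the
Pauli matrix `Y`, and `Ω = -i Uᴴ H U`, one has
`⟪φ, B φ⟫ = (1/2) ⟪ψ₀, (Ω w - wᴴ Ω) ψ₀⟫`. -/
theorem hadamard_test_anticommutator (d : ℕ) (hd : 1 ≤ d)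
    (ψ₀ : EuclideanSpace ℂ (Fin d))
    (U w : Matrix (Fin d) (Fin d) ℂ)
    (hU : Uᴴ * U = 1) (hw : wᴴ * w = 1)
    (H : Matrix (Fin d) (Fin d) ℂ) (hH : Hᴴ = H)
    (Y : Matrix (Fin 2) (Fin 2) ℂ)
    (hY : Y = !![0, -Complex.I; Complex.I, 0])
    (B : Matrix (Fin 2 × Fin d) (Fin 2 × Fin d) ℂ)
    (hB : B = Y ⊗ₖ H)
    (φ : EuclideanSpace ℂ (Fin 2 × Fin d))
    (hφ0 : ∀ i : Fin d, φ (0, i) = ((Real.sqrt 2)⁻¹ : ℂ) * U.mulVec ψ₀ i)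
    (hφ1 : ∀ i : Fin d, φ (1, i) = ((Real.sqrt 2)⁻¹ : ℂ) * U.mulVec (w.mulVec ψ₀) i)
    (Ω : Matrix (Fin d) (Fin d) ℂ)
    (hΩ : Ω = (-Complex.I) • (Uᴴ * H * U)) :
    (inner ℂ φ (toEucIdx (Fin 2 × Fin d) (B.mulVec φ)) : ℂ) =
      (1 / 2 : ℂ) * (inner ℂ ψ₀ (toEucIdx (Fin d) ((Ω * w - wᴴ * Ω).mulVec ψ₀)) : ℂ) :=
  hadamard_test_anticommutator_general d ψ₀ U w H Y hY B hB φ hφ0 hφ1 Ω hΩ
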